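/- arXiv:1203.3666 — 2 statements merged into one kernel-verified Lean document; each statement's English description precedes it below -/
import Mathlib

section
/- Let H be a Hilbert space, let G: H → ℝ be convex, lower semicontinuous and Gâteaux differentiable, and suppose λ* minimizes λ ↦ G(λ) + ∫_Ω δ_S*((λ − λ⁰)/τ) τ dx over an affine-closed convex subset, where δ_S* is a nonnegative convex positively one-homogeneous function. Then for every admissible λ̂: G(λ*) ≤ G(λ̂) + ∫_Ω δ_S*(λ̂ − λ*) dx (the discrete semistability inequality). -/
open Filter

/-- Discrete semistability: if `λ*` minimizes
`λ ↦ G(λ) + τ D((λ − λ⁰)/τ)` over a closed convex set `K`, where `G` is convex, lsc and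
Gâteaux differentiable and `D` is nonnegative, convex, one-homogeneous (hence subadditive),
then `G(λ*) ≤ G(λ̂) + D(λ̂ − λ*)` for every admissible `λ̂`. -/
theorem stmt_12 {X : Type*} [NormedAddCommGroup X] [InnerProductSpace ℝ X]
    (G D : X → ℝ)
    (hGconv : ConvexOn ℝ Set.univ G) (hGlsc : LowerSemicontinuous G)
    (hGdiff : ∀ x : X, ∃ L : X →L[ℝ] ℝ, ∀ v : X,
      Tendsto (fun t : ℝ => (G (x + t • v) - G x) / t) (nhdsWithin 0 {(0:ℝ)}ᶜ) (nhds (L v)))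
    (hD0 : ∀ x, 0 ≤ D x) (hDconv : ConvexOn ℝ Set.univ D)
    (hDhom : ∀ t : ℝ, 0 ≤ t → ∀ x, D (t • x) = t * D x)
    (hDsub : ∀ x y, D (x + y) ≤ D x + D y)
    (K : Set X) (hK : Convex ℝ K) (hKc : IsClosed K)
    (τ : ℝ) (hτ : 0 < τ) (lam0 lamS : X) (hmemS : lamS ∈ K)
    (hmin : ∀ lam ∈ K,
      G lamS + τ * D ((1 / τ) • (lamS - lam0)) ≤ G lam + τ * D ((1 / τ) • (lam - lam0))) :
    ∀ lamhat ∈ K, G lamS ≤ G lamhat + D (lamhat - lamS) := by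
  intro lamhat hmem
  have key := hmin lamhat hmem
  have hsplit : (1 / τ) • (lamhat - lam0) =
      (1 / τ) • (lamS - lam0) + (1 / τ) • (lamhat - lamS) := by
    rw [← smul_add]; congr 1; abel
  have h2 : D ((1 / τ) • (lamhat - lamS)) = (1 / τ) * D (lamhat - lamS) :=
    hDhom _ (by positivity) _
  have htri : D ((1 / τ) • (lamhat - lam0)) ≤
      D ((1 / τ) • (lamS - lam0)) + (1 / τ) * D (lamhat - lamS) := by
    rw [hsplit, ← h2]; exact hDsub _ _
  have hmul := mul_le_mul_of_nonneg_left htri hτ.le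
  have hc : τ * (1 / τ) = 1 := mul_one_div_cancel (ne_of_gt hτ)
  nlinarith [hD0 (lamhat - lamS)]
end

section
/- Let w solve the backward-Euler scheme ∫_Ω w^k φ dx + τ∫_Ω K∇w^k·∇φ dx + τ∫_Γ b I(w^k) φ dS = ∫_Ω w^{k-1}φ dx + τ∫_Ω r^k φ dx + τ∫_Γ b θ_ext φ dS for all φ ∈ H¹(Ω), where K ≥ κ₀ > 0 (uniformly elliptic), b ≥ 0, θ_ext ≥ 0, r^k ≥ 0 a.e., I(w) = 0 for w ≤ 0, and w⁰ ≥ 0 a.e. Then w^k ≥ 0 a.e. in Ω for all k. -/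
/-!
Test the scheme at step `k + 1` with the negative part `φ = min (w^{k+1}) 0`. On the left,
`∫ w^{k+1} φ = ∫ φ²`, the diffusion term is `≥ 0` by ellipticity because `∇φ` is `∇w^{k+1}` on
`{w^{k+1} < 0}` and `0` elsewhere, and the Robin term vanishes since `I(tr w^{k+1}) = 0` wherever
`tr φ ≠ 0`. On the right, every term pairs a nonnegative function (`w^k` by induction, `r^{k+1}`,
`b θ_ext`) with `φ ≤ 0`. Hence `∫ φ² ≤ 0`, so `φ = 0` a.e.
-/

open MeasureTheory

lemma mul_min_zero_self (t : ℝ) : t * min t 0 = min t 0 ^ 2 := by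
  rcases le_total t 0 with ht | ht
  · rw [min_eq_left ht, sq]
  · rw [min_eq_right ht]; ring

lemma mul_mul_min_zero_eq_zero {I : ℝ → ℝ} (hI : ∀ s : ℝ, s ≤ 0 → I s = 0) (b t : ℝ) :
    b * I t * min t 0 = 0 := by
  rcases le_total t 0 with ht | ht
  · rw [hI t ht, mul_zero, zero_mul]
  · rw [min_eq_right ht, mul_zero]

lemma inner_apply_ite_nonneg {E : Type*} [NormedAddCommGroup E] [InnerProductSpace ℝ E]
    {T : E →L[ℝ] E} {κ : ℝ} {ξ : E} (hκ : 0 ≤ κ) (hT : κ * ‖ξ‖ ^ 2 ≤ inner ℝ (T ξ) ξ)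
    (p : Prop) [Decidable p] : 0 ≤ inner ℝ (T ξ) (if p then ξ else 0) := by
  split_ifs
  · exact (by positivity : 0 ≤ κ * ‖ξ‖ ^ 2).trans hT
  · rw [inner_zero_right]

section NegativePart

variable {α : Type*} [MeasurableSpace α] {μ : Measure α}

lemma integral_mul_min_zero_nonpos {f : α → ℝ} (hf : 0 ≤ᵐ[μ] f) (u : α → ℝ) :
    ∫ x, f x * min (u x) 0 ∂μ ≤ 0 :=
  integral_nonpos_of_ae <| hf.mono fun _ hx =>
    mul_nonpos_of_nonneg_of_nonpos hx (min_le_right _ _)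

lemma ae_nonneg_of_integral_mul_min_zero_nonpos {u : α → ℝ} (hu : MemLp u 2 μ)
    (h : ∫ x, u x * min (u x) 0 ∂μ ≤ 0) : 0 ≤ᵐ[μ] u := by
  have hnonneg : 0 ≤ fun x => u x * min (u x) 0 := fun x => by
    simp only [Pi.zero_apply, mul_min_zero_self]; positivity
  have hint : Integrable (fun x => u x * min (u x) 0) μ := by
    refine hu.integrable_sq.mono' (hu.aestronglyMeasurable.mul
      (hu.aestronglyMeasurable.inf aestronglyMeasurable_const)) (ae_of_all _ fun x => ?_)
    rw [Real.norm_eq_abs, mul_min_zero_self, abs_sq]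
    rcases le_total (u x) 0 with hx | hx
    · rw [min_eq_left hx]
    · rw [min_eq_right hx, sq, zero_mul]; positivity
  have hzero := (integral_eq_zero_iff_of_nonneg hnonneg hint).mp
    (le_antisymm h (integral_nonneg hnonneg))
  filter_upwards [hzero] with x hx
  rw [Pi.zero_apply, mul_min_zero_self, sq_eq_zero_iff] at hx
  exact min_eq_right_iff.mp hx

end NegativePart

/-- Nonnegativity of the enthalpy in the backward-Euler scheme: if `w^k` solves
the implicit scheme (tested by all `φ` in the admissible class `V`, which is stable under
taking negative parts, with the usual chain rules for gradient and trace), with uniformly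
elliptic `K`, `b ≥ 0`, `θ_ext ≥ 0`, nonnegative heat sources `r^k ≥ 0`, `I(w) = 0` for
`w ≤ 0` and `w⁰ ≥ 0` a.e., then `w^k ≥ 0` a.e. for all `k`. -/
theorem stmt_17 {Ω Γ : Type*} [MeasureSpace Ω] [MeasureSpace Γ] (d : ℕ)
    (V : Set (Ω → ℝ))
    (grad : (Ω → ℝ) → Ω → EuclideanSpace ℝ (Fin d))
    (tr : (Ω → ℝ) → Γ → ℝ)
    (hVneg : ∀ w ∈ V, (fun x => min (w x) 0) ∈ V)
    (hgradneg : ∀ w ∈ V, ∀ x,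
      grad (fun x => min (w x) 0) x = if w x < 0 then grad w x else 0)
    (htrneg : ∀ w ∈ V, ∀ y, tr (fun x => min (w x) 0) y = min (tr w y) 0)
    (Kmat : Ω → EuclideanSpace ℝ (Fin d) →L[ℝ] EuclideanSpace ℝ (Fin d))
    (κ₀ : ℝ) (hκ₀ : 0 < κ₀)
    (hell : ∀ x ξ, κ₀ * ‖ξ‖ ^ 2 ≤ (inner ℝ (Kmat x ξ) ξ : ℝ))
    (b : Γ → ℝ) (hb : ∀ y, 0 ≤ b y)
    (θext : Γ → ℝ) (hθ : ∀ y, 0 ≤ θext y)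
    (Ifun : ℝ → ℝ) (hI : ∀ s : ℝ, s ≤ 0 → Ifun s = 0)
    (τ : ℝ) (hτ : 0 < τ)
    (w r : ℕ → Ω → ℝ)
    (hw0 : 0 ≤ᵐ[volume] w 0)
    (hr : ∀ k, 0 ≤ᵐ[volume] r k)
    (hwV : ∀ k, w k ∈ V)
    (hw2 : ∀ k, MemLp (w k) 2 volume)
    (heq : ∀ k : ℕ, ∀ φ ∈ V,
      (∫ x, w (k + 1) x * φ x) +
          τ * (∫ x, (inner ℝ (Kmat x (grad (w (k + 1)) x)) (grad φ x) : ℝ)) +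
          τ * (∫ y, b y * Ifun (tr (w (k + 1)) y) * tr φ y) =
        (∫ x, w k x * φ x) + τ * (∫ x, r (k + 1) x * φ x) +
          τ * (∫ y, b y * θext y * tr φ y)) :
    ∀ k, 0 ≤ᵐ[volume] w k := by
  intro k
  induction k with
  | zero => exact hw0
  | succ k ih =>
    have hu := hwV (k + 1)
    have scheme := heq k _ (hVneg _ hu)
    simp_rw [hgradneg _ hu, htrneg _ hu, mul_mul_min_zero_eq_zero hI, integral_zero,
      mul_zero, add_zero] at scheme
    have hdiffusion : 0 ≤ ∫ x, inner ℝ (Kmat x (grad (w (k + 1)) x))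
        (if w (k + 1) x < 0 then grad (w (k + 1)) x else 0) :=
      integral_nonneg fun x => inner_apply_ite_nonneg hκ₀.le (hell x _) _
    have hold := integral_mul_min_zero_nonpos ih (w (k + 1))
    have hsource := integral_mul_min_zero_nonpos (hr (k + 1)) (w (k + 1))
    have hexterior := integral_mul_min_zero_nonpos (f := fun y => b y * θext y)
      (ae_of_all volume fun y => mul_nonneg (hb y) (hθ y)) (tr (w (k + 1)))
    refine ae_nonneg_of_integral_mul_min_zero_nonpos (hw2 (k + 1)) ?_
    linarith [mul_nonneg hτ.le hdiffusion, mul_nonpos_of_nonneg_of_nonpos hτ.le hsource,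
      mul_nonpos_of_nonneg_of_nonpos hτ.le hexterior]
end
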